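/- There exist δ ∈ (0,1) and a function f : ℂ → ℂ complex-differentiable on the open ball B(1,δ), with f(x) ∈ ℝ for every real x ∈ B(1,δ), f(1) = 0, and f'(1) = 2^{2/3}, such that for every z ∈ B(1,δ) with z ∉ (−∞,1] one has f(z) ∉ (−∞,0] and f(z)^{3/2} = (3/2)·φ_←(z). -/

import Mathlib

/-!
Write `w = z - 1`. Pulling `(t w)^{1/2} = √t w^{1/2}` out of the integrand gives
`φ_←(z) = 2 w^{3/2} H(w)` with `H(w) = ∫₀¹ √t (1 + t w)^{-1/2} dt`. On the unit disc `H` is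
holomorphic with positive real part, `H(0) = 2/3`, and `Im H(w)` has the sign opposite to `Im w`
(because `arg ζ^{-1/2} = -arg ζ / 2`). Take `f(z) = w (3 H(w))^{2/3}`. As `arg w` and
`arg 3H(w)` have opposite signs and `|arg 3H(w)| < π/2`, the sum `arg w + (2/3) arg 3H(w)` stays
in `(-π, π)`; hence principal logarithms add, `f(z)` avoids the cut, and
`f(z)^{3/2} = w^{3/2} · 3H(w) = (3/2) φ_←(z)`.
-/

open Complex Metric Set intervalIntegral
open scoped ComplexOrder Real Interval

/-- `φ_←(z) = 2(z−1)·∫_0^1 (t(z−1))^{1/2}·(1+t(z−1))^{−1/2} dt`, the integral of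
`2(s−1)^{1/2} s^{−1/2}` over the straight segment from `1` to `z` (principal powers). -/
noncomputable def phiLeft (z : ℂ) : ℂ :=
  2 * (z - 1) *
    ∫ t in (0:ℝ)..1, ((t : ℂ) * (z - 1)) ^ ((1 : ℂ)/2) * (1 + (t : ℂ) * (z - 1)) ^ (-((1 : ℂ)/2))

lemma ofReal_image_Iic (c : ℝ) : ofReal '' Iic c = Iic (c : ℂ) := by
  ext z
  simp only [mem_image, mem_Iic, Complex.le_def, ofReal_re, ofReal_im]
  constructor
  · rintro ⟨x, hx, rfl⟩
    simp [hx]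
  · rintro ⟨hre, him⟩
    exact ⟨z.re, hre, Complex.ext rfl (by simp [him])⟩

lemma notMem_ofReal_image_Iic_iff {z : ℂ} {c : ℝ} :
    z ∉ ofReal '' Iic c ↔ z - c ∈ slitPlane := by
  rw [ofReal_image_Iic, mem_Iic, mem_slitPlane_iff_not_le_zero, sub_nonpos]

namespace Complex

lemma im_cpow_ofReal_eq_zero {ζ : ℂ} (hre : 0 ≤ ζ.re) (him : ζ.im = 0) (y : ℝ) :
    (ζ ^ (y : ℂ)).im = 0 := by
  rw [cpow_ofReal_im, arg_eq_zero_iff.2 ⟨hre, him⟩, zero_mul, Real.sin_zero, mul_zero]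

lemma neg_half_eq_ofReal : -(1 / 2 : ℂ) = ((-(1 / 2) : ℝ) : ℂ) := by push_cast; ring

lemma re_cpow_neg_half_pos {ζ : ℂ} (hζ : ζ ∈ slitPlane) : 0 < (ζ ^ (-(1 / 2 : ℂ))).re := by
  have harg : arg ζ < π := (arg_le_pi ζ).lt_of_ne (slitPlane_arg_ne_pi hζ)
  rw [neg_half_eq_ofReal, cpow_ofReal_re]
  refine mul_pos (Real.rpow_pos_of_pos (norm_pos_iff.2 (slitPlane_ne_zero hζ)) _)
    (Real.cos_pos_of_mem_Ioo ⟨?_, ?_⟩) <;> linarith [neg_pi_lt_arg ζ]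

lemma im_cpow_neg_half_mul_im_nonpos (ζ : ℂ) : (ζ ^ (-(1 / 2 : ℂ))).im * ζ.im ≤ 0 := by
  have hcos : 0 ≤ Real.cos (arg ζ / 2) :=
    Real.cos_nonneg_of_mem_Icc ⟨by linarith [neg_pi_lt_arg ζ], by linarith [arg_le_pi ζ]⟩
  have hsin : Real.sin (arg ζ) = 2 * Real.sin (arg ζ / 2) * Real.cos (arg ζ / 2) := by
    rw [← Real.sin_two_mul]; ring_nf
  rw [neg_half_eq_ofReal, cpow_ofReal_im, ← norm_mul_sin_arg ζ, hsin,
    show arg ζ * -(1 / 2) = -(arg ζ / 2) by ring, Real.sin_neg]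
  have : 0 ≤ ‖ζ‖ ^ (-(1 / 2) : ℝ) * ‖ζ‖ * Real.cos (arg ζ / 2) * Real.sin (arg ζ / 2) ^ 2 := by
    positivity
  nlinarith

lemma arg_nonpos_of_mem_slitPlane {z : ℂ} (hz : z ∈ slitPlane) (him : z.im ≤ 0) : arg z ≤ 0 := by
  rcases him.lt_or_eq with h | h
  · exact (arg_neg_iff.2 h).le
  · have hre : 0 < z.re := (mem_slitPlane_iff.1 hz).resolve_right (not_not.2 h)
    exact (arg_eq_zero_iff.2 ⟨hre.le, h⟩).le

lemma arg_mul_arg_nonpos {w a : ℂ} (hw : w ∈ slitPlane) (ha : a ∈ slitPlane)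
    (h : w.im * a.im ≤ 0) : arg w * arg a ≤ 0 := by
  rcases mul_nonpos_iff.1 h with ⟨hw', ha'⟩ | ⟨hw', ha'⟩
  · exact mul_nonpos_of_nonneg_of_nonpos (arg_nonneg_iff.2 hw') (arg_nonpos_of_mem_slitPlane ha ha')
  · exact mul_nonpos_of_nonpos_of_nonneg (arg_nonpos_of_mem_slitPlane hw hw') (arg_nonneg_iff.2 ha')

lemma mul_cpow_two_thirds_mem_slitPlane_and_cpow_three_halves {w a : ℂ} (hw : w ∈ slitPlane)
    (ha : 0 < a.re) (hwa : w.im * a.im ≤ 0) :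
    w * a ^ (2 / 3 : ℂ) ∈ slitPlane ∧
      (w * a ^ (2 / 3 : ℂ)) ^ (3 / 2 : ℂ) = w ^ (3 / 2 : ℂ) * a := by
  have hw0 := slitPlane_ne_zero hw
  have ha0 : a ≠ 0 := slitPlane_ne_zero (Or.inl ha)
  set L := log w + log a * (2 / 3) with hL
  have hexp : w * a ^ (2 / 3 : ℂ) = exp L := by
    rw [cpow_def_of_ne_zero ha0, hL, exp_add, exp_log hw0]
  have hLim : L.im = arg w + 2 / 3 * arg a := by
    simp [hL, log_im]
    ring
  have hargw : arg w < π := (arg_le_pi w).lt_of_ne (slitPlane_arg_ne_pi hw)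
  have harga := abs_lt.1 (abs_arg_lt_pi_div_two_iff.2 (Or.inl ha))
  have hprod := arg_mul_arg_nonpos hw (Or.inl ha) hwa
  have hL₁ : -π < L.im := by rw [hLim]; nlinarith [neg_pi_lt_arg w, Real.pi_pos]
  have hL₂ : L.im < π := by rw [hLim]; nlinarith [neg_pi_lt_arg w, Real.pi_pos]
  have hlog : log (exp L) = L := log_exp hL₁ hL₂.le
  rw [hexp]
  refine ⟨mem_slitPlane_iff_arg.2 ⟨?_, exp_ne_zero L⟩, ?_⟩
  · rw [← log_im, hlog]
    exact hL₂.ne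
  · rw [cpow_def_of_ne_zero (exp_ne_zero L), hlog, cpow_def_of_ne_zero hw0]
    nth_rw 1 [← exp_log ha0]
    rw [← exp_add]
    congr 1
    ring

lemma ofReal_mul_cpow {t : ℝ} (ht : 0 ≤ t) (w s : ℂ) :
    ((t : ℂ) * w) ^ s = (t : ℂ) ^ s * w ^ s := by
  rcases eq_or_ne s 0 with rfl | hs
  · simp
  rcases ht.eq_or_lt with rfl | ht
  · simp [zero_cpow hs]
  rcases eq_or_ne w 0 with rfl | hw
  · simp [zero_cpow hs]
  have ht' : (t : ℂ) ≠ 0 := ofReal_ne_zero.2 ht.ne'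
  rw [cpow_def_of_ne_zero (mul_ne_zero ht' hw), log_ofReal_mul ht hw, add_mul, exp_add,
    ofReal_log ht.le, ← cpow_def_of_ne_zero ht', ← cpow_def_of_ne_zero hw]

end Complex

noncomputable def phiLeftCore (w : ℂ) : ℂ :=
  ∫ t in (0:ℝ)..1, (√t : ℂ) * (1 + t * w) ^ (-(1 / 2 : ℂ))

lemma phiLeft_eq (z : ℂ) : phiLeft z = 2 * (z - 1) ^ (3 / 2 : ℂ) * phiLeftCore (z - 1) := by
  have hsqrt : ∀ t ∈ uIcc (0 : ℝ) 1,
      ((t : ℂ) * (z - 1)) ^ (1 / 2 : ℂ) = (√t : ℂ) * (z - 1) ^ (1 / 2 : ℂ) := by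
    intro t ht
    rw [uIcc_of_le zero_le_one] at ht
    rw [ofReal_mul_cpow ht.1, Real.sqrt_eq_rpow, Complex.ofReal_cpow ht.1]
    norm_num
  have hpow : (z - 1) * (z - 1) ^ (1 / 2 : ℂ) = (z - 1) ^ (3 / 2 : ℂ) := by
    rcases eq_or_ne (z - 1) 0 with h | h
    · simp [h]
    · rw [show (3 / 2 : ℂ) = 1 + 1 / 2 by norm_num, cpow_add _ _ h, cpow_one]
  have hint : ∀ t ∈ uIcc (0 : ℝ) 1,
      ((t : ℂ) * (z - 1)) ^ (1 / 2 : ℂ) * (1 + (t : ℂ) * (z - 1)) ^ (-(1 / 2 : ℂ)) =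
        (z - 1) ^ (1 / 2 : ℂ) * ((√t : ℂ) * (1 + t * (z - 1)) ^ (-(1 / 2 : ℂ))) := by
    intro t ht
    rw [hsqrt t ht]
    ring
  rw [phiLeft, phiLeftCore, integral_congr hint, integral_const_mul, ← hpow]
  ring

lemma norm_ofReal_mul_le {t : ℝ} (ht : t ∈ Icc (0 : ℝ) 1) (w : ℂ) : ‖(t : ℂ) * w‖ ≤ ‖w‖ := by
  rw [norm_mul, norm_real, Real.norm_of_nonneg ht.1]
  exact mul_le_of_le_one_left (norm_nonneg w) ht.2

lemma one_add_ofReal_mul_mem_slitPlane {w : ℂ} (hw : ‖w‖ < 1) {t : ℝ} (ht : t ∈ Icc (0 : ℝ) 1) :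
    1 + t * w ∈ slitPlane :=
  mem_slitPlane_of_norm_lt_one ((norm_ofReal_mul_le ht w).trans_lt hw)

lemma one_sub_norm_le_norm_one_add_ofReal_mul {t : ℝ} (ht : t ∈ Icc (0 : ℝ) 1) (w : ℂ) :
    1 - ‖w‖ ≤ ‖1 + t * w‖ := by
  have := norm_sub_le (1 + (t : ℂ) * w) (t * w)
  simp only [add_sub_cancel_right, norm_one] at this
  linarith [norm_ofReal_mul_le ht w]

lemma continuousOn_phiLeftCore_integrand {w : ℂ} (hw : ‖w‖ < 1) :
    ContinuousOn (fun t : ℝ => (√t : ℂ) * (1 + t * w) ^ (-(1 / 2 : ℂ))) (Icc 0 1) := fun t ht =>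
  (by fun_prop : Continuous fun t : ℝ => (√t : ℂ)).continuousWithinAt.mul
    ((by fun_prop : Continuous fun t : ℝ => 1 + (t : ℂ) * w).continuousWithinAt.cpow
      continuousWithinAt_const (one_add_ofReal_mul_mem_slitPlane hw ht))

lemma intervalIntegrable_phiLeftCore_integrand {w : ℂ} (hw : ‖w‖ < 1) :
    IntervalIntegrable (fun t : ℝ => (√t : ℂ) * (1 + t * w) ^ (-(1 / 2 : ℂ)))
      MeasureTheory.volume 0 1 :=
  (continuousOn_phiLeftCore_integrand hw).intervalIntegrable_of_Icc zero_le_one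

lemma re_phiLeftCore {w : ℂ} (hw : ‖w‖ < 1) :
    (phiLeftCore w).re = ∫ t in (0:ℝ)..1, √t * ((1 + t * w) ^ (-(1 / 2 : ℂ))).re := by
  simpa [phiLeftCore] using (intervalIntegral_re (intervalIntegrable_phiLeftCore_integrand hw)).symm

lemma im_phiLeftCore {w : ℂ} (hw : ‖w‖ < 1) :
    (phiLeftCore w).im = ∫ t in (0:ℝ)..1, √t * ((1 + t * w) ^ (-(1 / 2 : ℂ))).im := by
  simpa [phiLeftCore] using (intervalIntegral_im (intervalIntegrable_phiLeftCore_integrand hw)).symm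

lemma phiLeftCore_zero : phiLeftCore 0 = 2 / 3 := by
  have h : ∫ t in (0 : ℝ)..1, (t : ℂ) ^ (1 / 2 : ℂ) = 2 / 3 := by
    rw [integral_cpow (Or.inl (by norm_num))]
    norm_num
  rw [phiLeftCore, ← h]
  refine integral_congr fun t ht => ?_
  rw [uIcc_of_le zero_le_one] at ht
  simp [Real.sqrt_eq_rpow, Complex.ofReal_cpow ht.1]

lemma re_phiLeftCore_pos {w : ℂ} (hw : ‖w‖ < 1) : 0 < (phiLeftCore w).re := by
  rw [re_phiLeftCore hw]
  refine intervalIntegral_pos_of_pos_on ?_ (fun t ht => ?_) zero_lt_one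
  · refine ((Complex.continuous_re.comp_continuousOn
      (continuousOn_phiLeftCore_integrand hw)).congr fun t _ => ?_).intervalIntegrable_of_Icc
      zero_le_one
    simp
  · exact mul_pos (Real.sqrt_pos.2 ht.1) (Complex.re_cpow_neg_half_pos
      (one_add_ofReal_mul_mem_slitPlane hw (Ioo_subset_Icc_self ht)))

lemma im_phiLeftCore_mul_im_nonpos {w : ℂ} (hw : ‖w‖ < 1) : (phiLeftCore w).im * w.im ≤ 0 := by
  rw [im_phiLeftCore hw, ← integral_mul_const, ← neg_nonneg, ← integral_neg]
  refine integral_nonneg zero_le_one fun t ht => ?_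
  rcases ht.1.eq_or_lt with rfl | ht₀
  · simp
  have h := Complex.im_cpow_neg_half_mul_im_nonpos (1 + t * w)
  simp only [add_im, one_im, im_ofReal_mul, zero_add] at h
  have : ((1 + t * w) ^ (-(1 / 2 : ℂ))).im * w.im ≤ 0 :=
    nonpos_of_mul_nonpos_left (by linarith) ht₀
  nlinarith [Real.sqrt_nonneg t]

lemma im_phiLeftCore_eq_zero {w : ℂ} (hw : ‖w‖ < 1) (him : w.im = 0) :
    (phiLeftCore w).im = 0 := by
  rw [im_phiLeftCore hw]
  refine (integral_congr (g := fun _ => (0 : ℝ)) fun t ht => ?_).trans integral_zero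
  rw [uIcc_of_le zero_le_one] at ht
  have hre : 0 ≤ (1 + t * w).re :=
    ((mem_slitPlane_iff.1 (one_add_ofReal_mul_mem_slitPlane hw ht)).resolve_right
      (by simp [him])).le
  rw [Complex.neg_half_eq_ofReal, Complex.im_cpow_ofReal_eq_zero hre (by simp [him]), mul_zero]

lemma differentiableAt_phiLeftCore {w : ℂ} (hw : ‖w‖ < 1) : DifferentiableAt ℂ phiLeftCore w := by
  set r := (1 + ‖w‖) / 2 with hr_def
  have hr : r < 1 := by linarith
  have hwr : w ∈ ball (0 : ℂ) r := mem_ball_zero_iff.2 (by linarith)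
  have hIcc : ∀ t ∈ Ι (0 : ℝ) 1, t ∈ Icc (0 : ℝ) 1 := fun t ht =>
    Ioc_subset_Icc_self (uIoc_of_le (zero_le_one (α := ℝ)) ▸ ht)
  have key := hasDerivAt_integral_of_dominated_loc_of_deriv_le (μ := MeasureTheory.volume)
    (a := 0) (b := 1) (F := fun x (t : ℝ) => (√t : ℂ) * (1 + t * x) ^ (-(1 / 2 : ℂ)))
    (F' := fun x (t : ℝ) => (√t : ℂ) * (-(1 / 2 : ℂ) * (1 + t * x) ^ (-(1 / 2 : ℂ) - 1) * t))
    (bound := fun _ => (1 - r) ^ (-(3 / 2) : ℝ)) (isOpen_ball.mem_nhds hwr)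
    (.of_forall fun x => (by fun_prop : Measurable _).aestronglyMeasurable)
    (intervalIntegrable_phiLeftCore_integrand hw)
    ((by fun_prop : Measurable _).aestronglyMeasurable) ?_ intervalIntegrable_const ?_
  · exact key.2.differentiableAt
  · refine .of_forall fun t ht x hx => ?_
    obtain ⟨ht₀, ht₁⟩ := hIcc t ht
    have hbase : 1 - r ≤ ‖1 + t * x‖ := by
      have := one_sub_norm_le_norm_one_add_ofReal_mul (hIcc t ht) x
      linarith [mem_ball_zero_iff.1 hx]
    have hpow : ‖(1 + t * x) ^ (-(1 / 2 : ℂ) - 1)‖ ≤ (1 - r) ^ (-(3 / 2) : ℝ) := by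
      rw [show -(1 / 2 : ℂ) - 1 = ((-(3 / 2) : ℝ) : ℂ) by push_cast; ring, norm_cpow_real]
      exact Real.rpow_le_rpow_of_nonpos (by linarith) hbase (by norm_num)
    have hsqrt : √t ≤ 1 := Real.sqrt_le_one.2 ht₁
    calc ‖(√t : ℂ) * (-(1 / 2 : ℂ) * (1 + t * x) ^ (-(1 / 2 : ℂ) - 1) * t)‖
        = √t * (1 / 2 * ‖(1 + t * x) ^ (-(1 / 2 : ℂ) - 1)‖ * t) := by
          simp [Real.sqrt_nonneg, abs_of_nonneg ht₀]
      _ ≤ 1 * (1 * (1 - r) ^ (-(3 / 2) : ℝ) * 1) := by gcongr; norm_num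
      _ = (1 - r) ^ (-(3 / 2) : ℝ) := by ring
  · refine .of_forall fun t ht x hx => ?_
    have hslit := one_add_ofReal_mul_mem_slitPlane ((mem_ball_zero_iff.1 hx).trans hr)
      (hIcc t ht)
    have hlin : HasDerivAt (fun x : ℂ => 1 + t * x) t x := by
      simpa using ((hasDerivAt_id x).const_mul (t : ℂ)).const_add 1
    exact (hlin.cpow_const hslit).const_mul _

noncomputable def phiLeftRoot (z : ℂ) : ℂ := (z - 1) * (3 * phiLeftCore (z - 1)) ^ (2 / 3 : ℂ)

lemma three_mul_phiLeftCore_mem_slitPlane {w : ℂ} (hw : ‖w‖ < 1) : 3 * phiLeftCore w ∈ slitPlane :=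
  Or.inl (by simpa using re_phiLeftCore_pos hw)

lemma differentiableAt_three_mul_phiLeftCore_sub_one_cpow {z : ℂ} (hz : ‖z - 1‖ < 1) :
    DifferentiableAt ℂ (fun z => (3 * phiLeftCore (z - 1)) ^ (2 / 3 : ℂ)) z :=
  (((differentiableAt_phiLeftCore hz).comp z (differentiableAt_id.sub_const 1)).const_mul 3).cpow
    (differentiableAt_const _) (three_mul_phiLeftCore_mem_slitPlane hz)

lemma differentiableAt_phiLeftRoot {z : ℂ} (hz : ‖z - 1‖ < 1) :
    DifferentiableAt ℂ phiLeftRoot z :=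
  (differentiableAt_id.sub_const 1).mul (differentiableAt_three_mul_phiLeftCore_sub_one_cpow hz)

lemma hasDerivAt_phiLeftRoot_one : HasDerivAt phiLeftRoot ((2 : ℂ) ^ (2 / 3 : ℂ)) 1 := by
  have hpow := differentiableAt_three_mul_phiLeftCore_sub_one_cpow (z := 1) (by simp)
  refine (((hasDerivAt_id' (1 : ℂ)).sub_const 1).fun_mul hpow.hasDerivAt).congr_deriv ?_
  norm_num [phiLeftCore_zero]

lemma im_phiLeftRoot_ofReal {x : ℝ} (hx : ‖(x : ℂ) - 1‖ < 1) : (phiLeftRoot x).im = 0 := by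
  have him : ((x : ℂ) - 1).im = 0 := by simp
  have ha : (3 * phiLeftCore (x - 1)).im = 0 := by simp [im_phiLeftCore_eq_zero hx him]
  have hre : 0 ≤ (3 * phiLeftCore (x - 1)).re := by simpa using (re_phiLeftCore_pos hx).le
  rw [phiLeftRoot, show (2 / 3 : ℂ) = ((2 / 3 : ℝ) : ℂ) by push_cast; ring, mul_im,
    Complex.im_cpow_ofReal_eq_zero hre ha, him]
  ring

lemma phiLeftRoot_mem_slitPlane_and_cpow {z : ℂ} (hz : ‖z - 1‖ < 1) (hcut : z - 1 ∈ slitPlane) :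
    phiLeftRoot z ∈ slitPlane ∧ phiLeftRoot z ^ (3 / 2 : ℂ) = 3 / 2 * phiLeft z := by
  have ha := re_phiLeftCore_pos hz
  have key := Complex.mul_cpow_two_thirds_mem_slitPlane_and_cpow_three_halves hcut
    (a := 3 * phiLeftCore (z - 1)) (by simpa using ha) ?_
  · rw [phiLeftRoot, phiLeft_eq]
    refine ⟨key.1, key.2.trans (by ring)⟩
  · have := im_phiLeftCore_mul_im_nonpos hz
    simp only [mul_im, re_ofNat, im_ofNat, zero_mul, add_zero]
    nlinarith

/-- There are `δ ∈ (0,1)` and a function `f` analytic on `B(1,δ)`, real on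
real points, with `f(1) = 0`, `f'(1) = 2^{2/3}`, such that off the cut `(−∞,1]` the value
`f(z)` avoids `(−∞,0]` and `f(z)^{3/2} = (3/2) φ_←(z)`. -/
theorem stmt_3 :
    ∃ δ : ℝ, 0 < δ ∧ δ < 1 ∧
      ∃ f : ℂ → ℂ, DifferentiableOn ℂ f (ball (1 : ℂ) δ) ∧
        (∀ x : ℝ, (x : ℂ) ∈ ball (1 : ℂ) δ → (f x).im = 0) ∧
        f 1 = 0 ∧ deriv f 1 = (2 : ℂ) ^ ((2 : ℂ)/3) ∧
        ∀ z ∈ ball (1 : ℂ) δ, z ∉ (Complex.ofReal '' Set.Iic 1) →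
          f z ∉ (Complex.ofReal '' Set.Iic 0) ∧
          (f z) ^ ((3 : ℂ)/2) = (3/2 : ℂ) * phiLeft z := by
  have hball : ∀ z ∈ ball (1 : ℂ) (1 / 2), ‖z - 1‖ < 1 := fun z hz =>
    (mem_ball_iff_norm.1 hz).trans (by norm_num)
  refine ⟨1 / 2, by norm_num, by norm_num, phiLeftRoot,
    fun z hz => (differentiableAt_phiLeftRoot (hball z hz)).differentiableWithinAt,
    fun x hx => im_phiLeftRoot_ofReal (hball x hx), by simp [phiLeftRoot],
    hasDerivAt_phiLeftRoot_one.deriv, fun z hz hcut => ?_⟩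
  rw [notMem_ofReal_image_Iic_iff, ofReal_one] at hcut
  rw [notMem_ofReal_image_Iic_iff, ofReal_zero, sub_zero]
  exact phiLeftRoot_mem_slitPlane_and_cpow (hball z hz) hcut
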